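/- arXiv:1803.10412 — 3 statements merged into one kernel-verified Lean document; each statement's English description precedes it below -/
import Mathlib

section
/- Let G be a local groupoid in which every arrow is inversional, i.e. can be written as a well-defined product of invertible elements (elements g admitting g^{-1} with g g^{-1} = u(t(g)) and g^{-1} g = u(s(g))). Then the associative completion AC(G) := (well-formed words)/~, with multiplication given by concatenation, source and target s([w_1,...,w_n]) = s(w_n), t([w_1,...,w_n]) = t(w_1), and units [u(x)], is a groupoid: every element of AC(G) has a two-sided inverse. -/
/-- An (algebraic) local groupoid over a base `M`: a set of arrows `G` with source,
target, unit, a partially defined multiplication (with domain `D`) satisfying the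
unit laws and 3-associativity wherever defined. -/
structure LocalGroupoid (G : Type*) (M : Type*) where
  s : G → M
  t : G → M
  unit : M → G
  s_unit : ∀ x, s (unit x) = x
  t_unit : ∀ x, t (unit x) = x
  /-- the domain of the multiplication -/
  D : G → G → Prop
  D_st : ∀ {g h}, D g h → s g = t h
  mul : G → G → G
  D_unit_right : ∀ g, D g (unit (s g))
  D_unit_left : ∀ g, D (unit (t g)) g
  s_mul : ∀ {g h}, D g h → s (mul g h) = s h
  t_mul : ∀ {g h}, D g h → t (mul g h) = t g
  mul_unit_right : ∀ g, mul g (unit (s g)) = g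
  unit_mul : ∀ g, mul (unit (t g)) g = g
  assoc3 : ∀ {g h k}, D g h → D (mul g h) k → D h k → D g (mul h k) →
    mul (mul g h) k = mul g (mul h k)

namespace LocalGroupoid

variable {G : Type*} {M : Type*} (L : LocalGroupoid G M)

/-- A well-formed word: a nonempty list `(w₁, …, wₙ)` of arrows with
`s wᵢ = t wᵢ₊₁`. -/
def WFWord (w : List G) : Prop := w ≠ [] ∧ w.Chain' (fun a b => L.s a = L.t b)

/-- An elementary contraction of words: replace an adjacent pair whose product is
defined by the product. -/
inductive Contr : List G → List G → Prop
  | mk (p q : List G) {g h : G} (hD : L.D g h) :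
      Contr (p ++ g :: h :: q) (p ++ L.mul g h :: q)

/-- The equivalence relation on words generated by contractions and expansions. -/
def WordEquiv : List G → List G → Prop := Relation.EqvGen L.Contr

/-- `ContractsTo w v`: `v` is obtained from `w` by a finite sequence of contractions
(equivalently, `w` is obtained from `v` by expansions, i.e. `v ≤ w`). -/
def ContractsTo : List G → List G → Prop := Relation.ReflTransGen L.Contr

/-- The type of well-formed words. -/
def Word := {w : List G // L.WFWord w}

instance wordSetoid : Setoid L.Word :=
  ⟨fun a b => L.WordEquiv a.1 b.1, by
    constructor
    · exact fun a => Relation.EqvGen.refl _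
    · exact fun h => Relation.EqvGen.symm _ _ h
    · exact fun h1 h2 => Relation.EqvGen.trans _ _ _ h1 h2⟩

/-- The associative completion of a local groupoid: well-formed words modulo
contractions and expansions. -/
def AC := Quotient L.wordSetoid

/-- The one-letter word `(g)`. -/
def singletonWord (g : G) : L.Word := ⟨[g], ⟨by simp, List.IsChain.singleton _⟩⟩

/-- The completion map `G → AC(G)`. -/
def completion (g : G) : L.AC := Quotient.mk _ (L.singletonWord g)

/-- Target of a well-formed word: the target of its first letter. -/
def wordTgt (w : L.Word) : M := L.t (w.1.head w.2.1)

/-- Source of a well-formed word: the source of its last letter. -/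
def wordSrc (w : L.Word) : M := L.s (w.1.getLast w.2.1)

/-- `b` is a two-sided inverse of `a`. -/
def InvPair (a b : G) : Prop :=
  L.D a b ∧ L.D b a ∧ L.mul a b = L.unit (L.t a) ∧ L.mul b a = L.unit (L.s a)

/-- An arrow is invertible if it has a two-sided inverse. -/
def Invertible (a : G) : Prop := ∃ b, L.InvPair a b

/-- `LProd as seed r`: `r = a₁ (a₂ (⋯ (aₖ seed)))` where `as = [a₁, …, aₖ]`, all
products being defined. -/
inductive LProd : List G → G → G → Prop
  | nil (g : G) : LProd [] g g
  | cons {as : List G} {g p : G} (a : G) : LProd as g p → L.D a p → LProd (a :: as) g (L.mul a p)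

/-- `RProd seed bs r`: `r = ((⋯((seed b₁) b₂)⋯) bₖ)` where `bs = [b₁, …, bₖ]`, all
products being defined. -/
inductive RProd : G → List G → G → Prop
  | nil (g : G) : RProd g [] g
  | cons {bs : List G} {g r : G} (b : G) (hD : L.D g b) : RProd (L.mul g b) bs r → RProd g (b :: bs) r

/-- The inverse-decomposition property: every composable pair `(g,h)` decomposes
through invertible elements, either on the left:
`g = aₗ(⋯(a₂ a₁))` and `h = a₁⁻¹(⋯(aₗ⁻¹ (gh)))`, or on the right:
`h = ((b₁ b₂)⋯)bₘ` and `g = (((gh) bₘ⁻¹)⋯) b₁⁻¹`. -/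
def InvDecomp : Prop :=
  ∀ g h, L.D g h →
    (∃ a : List (G × G), (∀ p ∈ a, L.InvPair p.1 p.2) ∧
        L.LProd (a.map Prod.fst).reverse (L.unit (L.s g)) g ∧
        L.LProd (a.map Prod.snd) (L.mul g h) h) ∨
    (∃ b : List (G × G), (∀ p ∈ b, L.InvPair p.1 p.2) ∧
        L.RProd (L.unit (L.t h)) (b.map Prod.fst) h ∧
        L.RProd (L.mul g h) (b.map Prod.snd).reverse g)

/-- An associator at `x`: an arrow `g` with `s g = t g = x` such that some
well-formed word can be contracted both to `(g)` and to `(u x)`. -/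
def IsAssociator (x : M) (g : G) : Prop :=
  L.s g = x ∧ L.t g = x ∧
    ∃ w, L.WFWord w ∧ L.ContractsTo w [g] ∧ L.ContractsTo w [L.unit x]

/-- An arrow is inversional if it is a well-defined product of invertible elements. -/
def Inversional (g : G) : Prop :=
  ∃ w : List G, L.WFWord w ∧ (∀ a ∈ w, L.Invertible a) ∧ L.ContractsTo w [g]

/-- `EvalsTo w g`: some full bracketing of the word `w` can be evaluated (all
intermediate products being defined), with result `g`. -/
inductive EvalsTo : List G → G → Prop
  | single (g : G) : EvalsTo [g] g
  | mul {w1 w2 : List G} {g h : G} : EvalsTo w1 g → EvalsTo w2 h → L.D g h →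
      EvalsTo (w1 ++ w2) (L.mul g h)

/-- Global associativity: all defined bracketings of a composable tuple agree. -/
def GloballyAssociative : Prop := ∀ w g h, L.EvalsTo w g → L.EvalsTo w h → g = h

end LocalGroupoid

/-- A morphism of local groupoids. -/
structure IsMorphism {G₁ M₁ G₂ M₂ : Type*} (L₁ : LocalGroupoid G₁ M₁)
    (L₂ : LocalGroupoid G₂ M₂) (F : G₁ → G₂) (f : M₁ → M₂) : Prop where
  map_s : ∀ g, L₂.s (F g) = f (L₁.s g)
  map_t : ∀ g, L₂.t (F g) = f (L₁.t g)
  map_unit : ∀ x, F (L₁.unit x) = L₂.unit (f x)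
  map_D : ∀ {g h}, L₁.D g h → L₂.D (F g) (F h)
  map_mul : ∀ {g h}, L₁.D g h → F (L₁.mul g h) = L₂.mul (F g) (F h)

/-- A local groupoid is global (an honest groupoid) if multiplication is defined for
all matching pairs and every arrow is invertible. -/
structure IsGlobal {G M : Type*} (L : LocalGroupoid G M) : Prop where
  total : ∀ {g h}, L.s g = L.t h → L.D g h
  inv : ∀ g, L.Invertible g

/-!
Expanding every letter of a well-formed word `w` into a product of invertible arrows gives a
word `W` of invertible letters that contracts to `w`. The reversed word `v` of inverses of the
letters of `W` cancels `W` on both sides: the innermost pair `a a⁻¹` contracts to a unit, which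
is absorbed by a neighbouring letter. Hence `w v ~ W v ~ (u (t w))` and `v w ~ v W ~ (u (s w))`.
-/

namespace LocalGroupoid

variable {G M : Type*} {L : LocalGroupoid G M}

variable (L) in
/-- `IsPath x w y`: `w` is a well-formed word with target `x` and source `y`. -/
inductive IsPath : M → List G → M → Prop
  | single (g : G) : IsPath (L.t g) [g] (L.s g)
  | cons (g : G) {w : List G} {y : M} : IsPath (L.s g) w y → IsPath (L.t g) (g :: w) y

namespace IsPath

variable {x y z : M} {g : G} {w v : List G}

lemma append (hw : L.IsPath x w y) (hv : L.IsPath y v z) : L.IsPath x (w ++ v) z := by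
  induction hw with
  | single g => exact cons g hv
  | cons g _ ih => exact cons g (ih hv)

lemma ne_nil (hw : L.IsPath x w y) : w ≠ [] := by
  cases hw <;> simp

lemma eq_t_head (hw : L.IsPath x w y) (hne : w ≠ []) : x = L.t (w.head hne) := by
  cases hw <;> rfl

lemma eq_s_getLast (hw : L.IsPath x w y) (hne : w ≠ []) : y = L.s (w.getLast hne) := by
  induction hw with
  | single g => rfl
  | cons g hw ih => rw [List.getLast_cons hw.ne_nil]; exact ih hw.ne_nil

lemma wfWord (hw : L.IsPath x w y) : L.WFWord w := by
  refine ⟨hw.ne_nil, ?_⟩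
  induction hw with
  | single g => exact List.IsChain.singleton g
  | cons g hw ih =>
    obtain ⟨a, w, rfl⟩ := List.exists_cons_of_ne_nil hw.ne_nil
    exact List.IsChain.cons_cons (hw.eq_t_head (List.cons_ne_nil a w)) ih

lemma cons_cases (hw : L.IsPath x (g :: w) y) :
    x = L.t g ∧ ((w = [] ∧ y = L.s g) ∨ L.IsPath (L.s g) w y) := by
  cases hw with
  | single _ => exact ⟨rfl, .inl ⟨rfl, rfl⟩⟩
  | cons _ hw => exact ⟨rfl, .inr hw⟩

lemma of_contr (hw : L.IsPath x w y) (hc : L.Contr w v) : L.IsPath x v y := by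
  obtain @⟨p, q, g, h, hD⟩ := hc
  induction p generalizing x with
  | nil =>
    rw [List.nil_append] at hw ⊢
    obtain ⟨rfl, ⟨hnil, -⟩ | hw⟩ := hw.cons_cases
    · exact absurd hnil (List.cons_ne_nil _ _)
    obtain ⟨-, ⟨rfl, rfl⟩ | hq⟩ := hw.cons_cases
    · rw [← L.t_mul hD, ← L.s_mul hD]
      exact single _
    · rw [← L.t_mul hD]
      exact cons _ (by rwa [L.s_mul hD])
  | cons a p ih =>
    obtain ⟨rfl, ⟨hnil, -⟩ | hw⟩ := hw.cons_cases
    · exact absurd hnil (List.append_ne_nil_of_right_ne_nil p (List.cons_ne_nil _ _))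
    exact cons a (ih hw)

lemma of_contractsTo (hw : L.IsPath x w y) (hc : L.ContractsTo w v) : L.IsPath x v y := by
  induction hc with
  | refl => exact hw
  | tail _ hstep ih => exact ih.of_contr hstep

lemma unit_cons_contractsTo (hw : L.IsPath x w y) : L.ContractsTo (L.unit x :: w) w := by
  obtain ⟨g, w, rfl⟩ := List.exists_cons_of_ne_nil hw.ne_nil
  obtain ⟨rfl, -⟩ := hw.cons_cases
  have hc := Contr.mk [] w (L.D_unit_left g)
  rw [List.nil_append, List.nil_append, L.unit_mul] at hc
  exact .single hc

end IsPath

lemma isPath_of_wfWord {w : List G} (hw : L.WFWord w) :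
    L.IsPath (L.t (w.head hw.1)) w (L.s (w.getLast hw.1)) := by
  obtain ⟨hne, hchain⟩ := hw
  induction w with
  | nil => exact absurd rfl hne
  | cons g w ih =>
    rcases w with _ | ⟨a, w⟩
    · exact .single g
    · obtain ⟨hga, hchain⟩ := List.isChain_cons_cons.1 hchain
      have hpath := ih (List.cons_ne_nil a w) hchain
      rw [List.getLast_cons (List.cons_ne_nil a w)]
      exact .cons g (by rwa [hga])

lemma Contr.append_append {u u' : List G} (h : L.Contr u u') (p q : List G) :
    L.Contr (p ++ u ++ q) (p ++ u' ++ q) := by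
  obtain ⟨p', q', hD⟩ := h
  simpa only [List.append_assoc, List.cons_append] using Contr.mk (L := L) (p ++ p') (q' ++ q) hD

lemma ContractsTo.append_append {u u' : List G} (h : L.ContractsTo u u') (p q : List G) :
    L.ContractsTo (p ++ u ++ q) (p ++ u' ++ q) :=
  Relation.ReflTransGen.lift (fun u ↦ p ++ u ++ q) (fun _ _ hc ↦ hc.append_append p q) _ _ h

lemma ContractsTo.wordEquiv {u u' : List G} (h : L.ContractsTo u u') : L.WordEquiv u u' :=
  Relation.EqvGen.reflTransGen_le_eqvGen L.Contr _ _ h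

lemma contractsTo_pair {g h : G} (hD : L.D g h) : L.ContractsTo [g, h] [L.mul g h] :=
  .single (Contr.mk [] [] hD)

lemma IsPath.exists_invertible_contractsTo (hinv : ∀ g : G, L.Inversional g) {x y : M}
    {w : List G} (hw : L.IsPath x w y) :
    ∃ W : List G, (∀ a ∈ W, L.Invertible a) ∧ L.IsPath x W y ∧ L.ContractsTo W w := by
  have letter (g : G) : ∃ W : List G, (∀ a ∈ W, L.Invertible a) ∧
      L.IsPath (L.t g) W (L.s g) ∧ L.ContractsTo W [g] := by
    obtain ⟨W, hW, hinvW, hc⟩ := hinv g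
    have hpath := isPath_of_wfWord hW
    have hg := hpath.of_contractsTo hc
    have ht : L.t (W.head hW.1) = L.t g := hg.eq_t_head (List.cons_ne_nil g [])
    have hs : L.s (W.getLast hW.1) = L.s g := hg.eq_s_getLast (List.cons_ne_nil g [])
    exact ⟨W, hinvW, ht ▸ hs ▸ hpath, hc⟩
  induction hw with
  | single g => exact letter g
  | @cons g w y _ ih =>
    obtain ⟨W, hinvW, hW, hcW⟩ := ih
    obtain ⟨V, hinvV, hV, hcV⟩ := letter g
    refine ⟨V ++ W, fun a ha ↦ (List.mem_append.1 ha).elim (hinvV a) (hinvW a), hV.append hW, ?_⟩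
    have hcVW : L.ContractsTo (V ++ W) (V ++ w) := by simpa using hcW.append_append V []
    have hcVw : L.ContractsTo (V ++ w) (g :: w) := by simpa using hcV.append_append [] w
    exact hcVW.trans hcVw

namespace InvPair

variable {g b : G}

lemma isPath_singleton (h : L.InvPair g b) : L.IsPath (L.s g) [b] (L.t g) := by
  obtain ⟨hgb, hbg, -, -⟩ := h
  rw [L.D_st hgb, ← L.D_st hbg]
  exact .single b

lemma contractsTo_unit_t (h : L.InvPair g b) : L.ContractsTo [g, b] [L.unit (L.t g)] :=
  h.2.2.1 ▸ contractsTo_pair h.1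

lemma contractsTo_unit_s (h : L.InvPair g b) : L.ContractsTo [b, g] [L.unit (L.s g)] :=
  h.2.2.2 ▸ contractsTo_pair h.2.1

end InvPair

lemma IsPath.exists_inverse_of_invertible {x y : M} {w : List G} (hw : L.IsPath x w y)
    (hinv : ∀ a ∈ w, L.Invertible a) :
    ∃ v, L.IsPath y v x ∧ L.ContractsTo (w ++ v) [L.unit x] ∧
      L.ContractsTo (v ++ w) [L.unit y] := by
  induction hw with
  | single g =>
    obtain ⟨b, hgb⟩ := hinv g (List.mem_singleton_self g)
    exact ⟨[b], hgb.isPath_singleton, hgb.contractsTo_unit_t, hgb.contractsTo_unit_s⟩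
  | @cons g w y hw ih =>
    obtain ⟨v, hv, hwv, hvw⟩ := ih fun a ha ↦ hinv a (List.mem_cons_of_mem g ha)
    obtain ⟨b, hgb⟩ := hinv g List.mem_cons_self
    refine ⟨v ++ [b], hv.append hgb.isPath_singleton, ?_, ?_⟩
    · have hg : L.ContractsTo [g, L.unit (L.s g)] [g] := by
        simpa only [L.mul_unit_right] using contractsTo_pair (L.D_unit_right g)
      have h₁ : L.ContractsTo (g :: w ++ (v ++ [b])) [g, L.unit (L.s g), b] := by
        simpa using hwv.append_append [g] [b]
      have h₂ : L.ContractsTo [g, L.unit (L.s g), b] [g, b] := by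
        simpa using hg.append_append [] [b]
      exact h₁.trans (h₂.trans hgb.contractsTo_unit_t)
    · have h₁ : L.ContractsTo (v ++ [b] ++ g :: w) (v ++ L.unit (L.s g) :: w) := by
        simpa using hgb.contractsTo_unit_s.append_append v w
      have h₂ : L.ContractsTo (v ++ L.unit (L.s g) :: w) (v ++ w) := by
        simpa using hw.unit_cons_contractsTo.append_append v []
      exact h₁.trans (h₂.trans hvw)

lemma IsPath.exists_wordEquiv_inverse (hinv : ∀ g : G, L.Inversional g) {x y : M}
    {w : List G} (hw : L.IsPath x w y) :
    ∃ v, L.IsPath y v x ∧ L.WordEquiv (w ++ v) [L.unit x] ∧ L.WordEquiv (v ++ w) [L.unit y] := by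
  obtain ⟨W, hinvW, hW, hWw⟩ := hw.exists_invertible_contractsTo hinv
  obtain ⟨v, hv, hWv, hvW⟩ := hW.exists_inverse_of_invertible hinvW
  have hWv_wv : L.ContractsTo (W ++ v) (w ++ v) := by simpa using hWw.append_append [] v
  have hvW_vw : L.ContractsTo (v ++ W) (v ++ w) := by simpa using hWw.append_append v []
  exact ⟨v, hv, .trans _ _ _ (.symm _ _ hWv_wv.wordEquiv) hWv.wordEquiv,
    .trans _ _ _ (.symm _ _ hvW_vw.wordEquiv) hvW.wordEquiv⟩

end LocalGroupoid

/-- If `G` is an inversional local groupoid, then its associative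
completion `AC(G)` (well-formed words modulo contractions/expansions, with
multiplication given by concatenation, source/target `s[w₁,…,wₙ] = s wₙ`,
`t[w₁,…,wₙ] = t w₁`, and units the classes `[u x]`) is a groupoid: every class
`[w]` has a two-sided inverse `[v]`, i.e. the concatenations `w ++ v` and
`v ++ w` are well-formed and equivalent to the unit words at `t(w)` resp. `s(w)`. -/
theorem AC_is_groupoid {G M : Type*} (L : LocalGroupoid G M)
    (hinv : ∀ g : G, L.Inversional g) :
    ∀ (w : List G) (hw : L.WFWord w), ∃ (v : List G) (hv : L.WFWord v),
      L.s (w.getLast hw.1) = L.t (v.head hv.1) ∧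
      L.s (v.getLast hv.1) = L.t (w.head hw.1) ∧
      L.WordEquiv (w ++ v) [L.unit (L.t (w.head hw.1))] ∧
      L.WordEquiv (v ++ w) [L.unit (L.t (v.head hv.1))] := by
  intro w hw
  obtain ⟨v, hv, hwv, hvw⟩ := (LocalGroupoid.isPath_of_wfWord hw).exists_wordEquiv_inverse hinv
  have hv_head : L.s (w.getLast hw.1) = L.t (v.head hv.ne_nil) := hv.eq_t_head hv.ne_nil
  refine ⟨v, hv.wfWord, hv_head, (hv.eq_s_getLast hv.ne_nil).symm, hwv, ?_⟩
  rwa [← hv_head]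
end

section
/- Let G'' = {(y,x,a) ∈ S² × S² × ℝ : x + y ≠ 0} with s(y,x,a) = x, t(y,x,a) = y, units (x,x,0), and multiplication (z,y,a)·(y,x,a') = (z,x,a+a'+A(Δxyz)) defined exactly when x+z ≠ 0 and the signed spherical area A(Δxyz) ∈ (-π, π). Then G'' is 3-associative: whenever both ((z,y,a_1)(y,x,a_2))(x,w,a_3) and (z,y,a_1)((y,x,a_2)(x,w,a_3)) are defined, they are equal. -/
open scoped RealInnerProductSpace

noncomputable section

/-- The unit sphere `S² ⊂ ℝ³`. -/
def Sph : Type := Metric.sphere (0 : EuclideanSpace ℝ (Fin 3)) 1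

instance : Coe Sph (EuclideanSpace ℝ (Fin 3)) := ⟨fun x => x.1⟩

/-- The scalar triple product `x ⋅ (y × z)` in `ℝ³`. -/
def tripleProd (x y z : EuclideanSpace ℝ (Fin 3)) : ℝ :=
  x 0 * (y 1 * z 2 - y 2 * z 1) - x 1 * (y 0 * z 2 - y 2 * z 0) +
    x 2 * (y 0 * z 1 - y 1 * z 0)

/-- The signed area `A(Δxyz) ∈ (-2π, 2π]` of the geodesic spherical triangle with
vertices `x, y, z` on the unit sphere (the signed solid angle, via the
Van Oosterom–Strackee formula); it represents the area class in `ℝ/4πℤ`. -/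
def sphArea (x y z : EuclideanSpace ℝ (Fin 3)) : ℝ :=
  2 * Complex.arg (Complex.mk (1 + ⟪x, y⟫ + ⟪y, z⟫ + ⟪z, x⟫) (tripleProd x y z))

/-- Arrows of the local Lie groupoid `G''` over `S²`: triples `(y, x, a)` with target
`y`, source `x` and `a ∈ ℝ`. -/
def Arr : Type := Sph × Sph × ℝ

/-- Validity of an arrow `(y, x, a)`: the source and target are not antipodal,
`x + y ≠ 0`. -/
def ArrValid (p : Arr) : Prop := ((p.2.1 : EuclideanSpace ℝ (Fin 3)) + (p.1 : EuclideanSpace ℝ (Fin 3))) ≠ 0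

/-- The multiplication `(z,y,a) ⬝ (y,x,a') = (z, x, a + a' + A(Δxyz))` of `G''`. -/
def gMul (p q : Arr) : Arr :=
  (p.1, q.2.1, p.2.2 + q.2.2 + sphArea (q.2.1 : EuclideanSpace ℝ (Fin 3)) (p.2.1 : EuclideanSpace ℝ (Fin 3)) (p.1 : EuclideanSpace ℝ (Fin 3)))

/-- The domain of the multiplication of `G''`: `(z,y,a) ⬝ (y',x,a')` is defined
exactly when `y = y'`, `x + z ≠ 0` and the signed area `A(Δxyz)` lies in `(-π, π)`. -/
def gDef (p q : Arr) : Prop :=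
  p.2.1 = q.1 ∧
  ((q.2.1 : EuclideanSpace ℝ (Fin 3)) + (p.1 : EuclideanSpace ℝ (Fin 3))) ≠ 0 ∧
  sphArea (q.2.1 : EuclideanSpace ℝ (Fin 3)) (p.2.1 : EuclideanSpace ℝ (Fin 3)) (p.1 : EuclideanSpace ℝ (Fin 3)) ∈ Set.Ioo (-Real.pi) Real.pi

end


private lemma cmk_re (a b : ℝ) : (Complex.mk a b).re = a := rfl
private lemma cmk_im (a b : ℝ) : (Complex.mk a b).im = b := rfl

/-- The complex number whose argument is half the signed area. -/
private noncomputable def FF (x y z : EuclideanSpace ℝ (Fin 3)) : ℂ :=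
  Complex.mk (1 + ⟪x, y⟫ + ⟪y, z⟫ + ⟪z, x⟫) (tripleProd x y z)

private lemma sphArea_eq_arg (x y z : EuclideanSpace ℝ (Fin 3)) :
    sphArea x y z = 2 * (FF x y z).arg := rfl

private lemma unit_expand (v : EuclideanSpace ℝ (Fin 3)) (h : ‖v‖ = 1) :
    v 0 * v 0 + v 1 * v 1 + v 2 * v 2 = 1 := by
  have h2 : ⟪v, v⟫ = 1 := by rw [real_inner_self_eq_norm_sq, h]; norm_num
  rw [PiLp.inner_apply] at h2
  simp only [RCLike.inner_apply, conj_trivial, Fin.sum_univ_three] at h2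
  linear_combination h2

private lemma pos_inner (u v : EuclideanSpace ℝ (Fin 3)) (hu : ‖u‖ = 1) (hv : ‖v‖ = 1)
    (h : u + v ≠ 0) : 0 < 1 + ⟪u, v⟫ := by
  have h1 : 0 < ‖u + v‖ ^ 2 := by
    have := norm_pos_iff.mpr h
    positivity
  have h2 := norm_add_sq_real u v
  rw [hu, hv] at h2
  nlinarith [h1, h2]

set_option maxRecDepth 100000 in
private lemma normSq_FF (x y z : EuclideanSpace ℝ (Fin 3))
    (hx : ‖x‖ = 1) (hy : ‖y‖ = 1) (hz : ‖z‖ = 1) :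
    Complex.normSq (FF x y z) = 2 * ((1 + ⟪x, y⟫) * ((1 + ⟪y, z⟫) * (1 + ⟪z, x⟫))) := by
  have hx' := unit_expand x hx
  have hy' := unit_expand y hy
  have hz' := unit_expand z hz
  simp only [FF, Complex.normSq_mk, tripleProd, PiLp.inner_apply, RCLike.inner_apply,
    conj_trivial, Fin.sum_univ_three]
  linear_combination ((z 0)^2 + (y 2)^2*(z 1)^2 - 2*(y 1)*(y 2)*(z 1)*(z 2) + (y 1)^2*(z 2)^2 - 2*(y 0)*(y 2)*(z 0)*(z 2) - 2*(y 0)*(y 1)*(z 0)*(z 1) + (y 0)^2 - 2*(y 0)^2*(z 0)^2) * hx' + (1 - 1*(z 0)^2 - 1*(x 2)^2 + (x 2)^2*(z 1)^2 + 2*(x 2)^2*(z 0)^2 - 2*(x 1)*(x 2)*(z 1)*(z 2) - 1*(x 1)^2 + (x 1)^2*(z 2)^2 + 2*(x 1)^2*(z 0)^2 - 2*(x 0)*(x 2)*(z 0)*(z 2) - 2*(x 0)*(x 1)*(z 0)*(z 1)) * hy' + ((y 2)^2 + (y 1)^2 + (x 2)^2 - 2*(x 2)^2*(y 2)^2 -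 1*(x 2)^2*(y 1)^2 - 2*(x 1)*(x 2)*(y 1)*(y 2) + (x 1)^2 - 1*(x 1)^2*(y 2)^2 - 2*(x 1)^2*(y 1)^2 - 2*(x 0)*(x 2)*(y 0)*(y 2) - 2*(x 0)*(x 1)*(y 0)*(y 1)) * hz'

private lemma FF_ne_zero (x y z : EuclideanSpace ℝ (Fin 3))
    (hx : ‖x‖ = 1) (hy : ‖y‖ = 1) (hz : ‖z‖ = 1)
    (hxy : x + y ≠ 0) (hyz : y + z ≠ 0) (hzx : z + x ≠ 0) : FF x y z ≠ 0 := by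
  rw [← Complex.normSq_pos, normSq_FF x y z hx hy hz]
  have p1 := pos_inner x y hx hy hxy
  have p2 := pos_inner y z hy hz hyz
  have p3 := pos_inner z x hz hx hzx
  exact mul_pos two_pos (mul_pos p1 (mul_pos p2 p3))

set_option maxRecDepth 100000 in
private lemma key_mul (w x y z : EuclideanSpace ℝ (Fin 3))
    (hw : ‖w‖ = 1) (hx : ‖x‖ = 1) (hy : ‖y‖ = 1) (hz : ‖z‖ = 1) :
    ((1 + ⟪w, y⟫ : ℝ) : ℂ) * (FF x y z * FF w x z) =
      ((1 + ⟪x, z⟫ : ℝ) : ℂ) * (FF w x y * FF w y z) := by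
  have hw' := unit_expand w hw
  have hx' := unit_expand x hx
  have hy' := unit_expand y hy
  have hz' := unit_expand z hz
  apply Complex.ext
  · simp only [FF, Complex.mul_re, Complex.ofReal_re, Complex.ofReal_im, cmk_re, cmk_im,
      tripleProd, PiLp.inner_apply, RCLike.inner_apply, conj_trivial, Fin.sum_univ_three]
    linear_combination ((y 0)*(y 2)*(z 0)*(z 2) + (y 0)*(y 1)*(z 0)*(z 1) - 1*(y 0)^2 + (y 0)^2*(z 0)^2 + (x 2)*(y 1)*(y 2)*(z 1) - 1*(x 2)*(y 1)^2*(z 2) + (x 2)*(y 0)*(y 2)*(z 0) - 1*(x 2)*(y 0)^2*(z 2) + (x 2)^2*(y 1)*(y 2)*(z 1)*(z 2) - 1*(x 2)^2*(y 1)^2*(z 2)^2 - 1*(x 2)^2*(y 0)*(y 1)*(z 0)*(z 1) + (x 2)^2*(y 0)^2*(z 1)^2 - 1*(x 1)*(y 2)^2*(z 1) + (x 1)*(y 1)*(y 2)*(z 2) + (x 1)*(y 0)*(y 1)*(z 0) - 1*(x 1)*(y 0)^2*(z 1) - 1*(x 1)*(x 2)*(y 2)^2*(z 1)*(z 2) +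 (x 1)*(x 2)*(y 1)*(y 2)*(z 2)^2 + (x 1)*(x 2)*(y 1)*(y 2)*(z 1)^2 - 1*(x 1)*(x 2)*(y 1)^2*(z 1)*(z 2) + (x 1)*(x 2)*(y 0)*(y 2)*(z 0)*(z 1) + (x 1)*(x 2)*(y 0)*(y 1)*(z 0)*(z 2) - 2*(x 1)*(x 2)*(y 0)^2*(z 1)*(z 2) - 1*(x 1)^2*(y 2)^2*(z 1)^2 + (x 1)^2*(y 1)*(y 2)*(z 1)*(z 2) - 1*(x 1)^2*(y 0)*(y 2)*(z 0)*(z 2) + (x 1)^2*(y 0)^2*(z 2)^2 - 1*(x 0)*(z 0) + (x 0)*(y 0)*(y 2)*(z 2) + (x 0)*(y 0)*(y 1)*(z 1) + (x 0)*(y 0)^2*(z 0) - 1*(x 0)*(x 2)*(z 0)*(z 2) + (x 0)*(x 2)*(y 1)*(y 2)*(z 0)*(z 1) - 1*(x 0)*(x 2)*(y 1)^2*(z 0)*(z 2) + (x 0)*(x 2)*(y 0)*(y 2) - 1*(x 0)*(x 2)*(y 0)*(y 2)*(z 1)^2 + (x 0)*(x 2)*(y 0)*(y 1)*(z 1)*(z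 2) - 1*(x 0)*(x 1)*(z 0)*(z 1) - 1*(x 0)*(x 1)*(y 2)^2*(z 0)*(z 1) + (x 0)*(x 1)*(y 1)*(y 2)*(z 0)*(z 2) + (x 0)*(x 1)*(y 0)*(y 2)*(z 1)*(z 2) + (x 0)*(x 1)*(y 0)*(y 1) - 1*(x 0)*(x 1)*(y 0)*(y 1)*(z 2)^2 - 1*(x 0)^2*(z 0)^2 + (x 0)^2*(y 0)^2) * hw' + (-1*(y 0)*(y 2)*(z 0)*(z 2) - 1*(y 0)*(y 1)*(z 0)*(z 1) + (y 0)^2 - 1*(y 0)^2*(z 0)^2 + (w 2)*(y 2)*(z 1)^2 + (w 2)*(y 2)*(z 0)^2 - 1*(w 2)*(y 1)*(z 1)*(z 2) - 1*(w 2)*(y 0)*(z 0)*(z 2) + (w 2)^2*(z 0)^2 + (w 2)^2*(y 2)^2*(z 1)^2 - 1*(w 2)^2*(y 1)*(y 2)*(z 1)*(z 2) - 1*(w 2)^2*(y 1)^2*(z 0)^2 + (w 2)^2*(y 0)*(y 1)*(z 0)*(z 1) - 1*(w 2)^2*(y 0)^2 - 1*(w 1)*(y 2)*(z 1)*(z 2)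 + (w 1)*(y 1)*(z 2)^2 + (w 1)*(y 1)*(z 0)^2 - 1*(w 1)*(y 0)*(z 0)*(z 1) - 1*(w 1)*(w 2)*(y 2)^2*(z 1)*(z 2) + (w 1)*(w 2)*(y 1)*(y 2)*(z 2)^2 + (w 1)*(w 2)*(y 1)*(y 2)*(z 1)^2 + 2*(w 1)*(w 2)*(y 1)*(y 2)*(z 0)^2 - 1*(w 1)*(w 2)*(y 1)^2*(z 1)*(z 2) - 1*(w 1)*(w 2)*(y 0)*(y 2)*(z 0)*(z 1) - 1*(w 1)*(w 2)*(y 0)*(y 1)*(z 0)*(z 2) + (w 1)^2*(z 0)^2 - 1*(w 1)^2*(y 2)^2*(z 0)^2 - 1*(w 1)^2*(y 1)*(y 2)*(z 1)*(z 2) + (w 1)^2*(y 1)^2*(z 2)^2 + (w 1)^2*(y 0)*(y 2)*(z 0)*(z 2) - 1*(w 1)^2*(y 0)^2 - 1*(w 0)*(y 2)*(z 0)*(z 2) - 1*(w 0)*(y 1)*(z 0)*(z 1) + (w 0)*(y 0) - 1*(w 0)*(y 0)*(z 0)^2 - 1*(w 0)*(w 2)*(z 0)*(z 2) - 1*(w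 0)*(w 2)*(y 1)*(y 2)*(z 0)*(z 1) + (w 0)*(w 2)*(y 1)^2*(z 0)*(z 2) + (w 0)*(w 2)*(y 0)*(y 2) + (w 0)*(w 2)*(y 0)*(y 2)*(z 1)^2 - 1*(w 0)*(w 2)*(y 0)*(y 1)*(z 1)*(z 2) - 1*(w 0)*(w 1)*(z 0)*(z 1) + (w 0)*(w 1)*(y 2)^2*(z 0)*(z 1) - 1*(w 0)*(w 1)*(y 1)*(y 2)*(z 0)*(z 2) - 1*(w 0)*(w 1)*(y 0)*(y 2)*(z 1)*(z 2) + (w 0)*(w 1)*(y 0)*(y 1) + (w 0)*(w 1)*(y 0)*(y 1)*(z 2)^2) * hx' + (-1*(x 2)*(z 2) - 1*(x 2)^2 + (x 2)^2*(z 1)^2 + (x 2)^2*(z 0)^2 - 1*(x 1)*(z 1) - 2*(x 1)*(x 2)*(z 1)*(z 2) - 1*(x 1)^2 + (x 1)^2*(z 2)^2 + (x 1)^2*(z 0)^2 - 1*(x 0)*(x 2)*(z 0)*(z 2) - 1*(x 0)*(x 1)*(z 0)*(z 1) - 1*(w 2)^2*(z 0)^2 + (w 2)^2*(x 2)*(z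 2) + (w 2)^2*(x 2)^2 - 1*(w 2)^2*(x 2)^2*(z 1)^2 + (w 2)^2*(x 1)*(x 2)*(z 1)*(z 2) + (w 2)^2*(x 1)^2 - 1*(w 2)^2*(x 1)^2*(z 2)^2 - 1*(w 2)^2*(x 1)^2*(z 1)^2 - 1*(w 2)^2*(x 0)*(z 0) - 1*(w 2)^2*(x 0)*(x 1)*(z 0)*(z 1) + (w 1)*(w 2)*(x 2)*(z 1) + (w 1)*(w 2)*(x 2)^2*(z 1)*(z 2) + (w 1)*(w 2)*(x 1)*(z 2) + (w 1)*(w 2)*(x 1)*(x 2)*(z 2)^2 + (w 1)*(w 2)*(x 1)*(x 2)*(z 1)^2 + (w 1)*(w 2)*(x 1)^2*(z 1)*(z 2) + (w 1)*(w 2)*(x 0)*(x 2)*(z 0)*(z 1) + (w 1)*(w 2)*(x 0)*(x 1)*(z 0)*(z 2) - 1*(w 1)^2*(z 0)^2 + (w 1)^2*(x 2)^2 - 1*(w 1)^2*(x 2)^2*(z 2)^2 - 1*(w 1)^2*(x 2)^2*(z 1)^2 + (w 1)^2*(x 1)*(z 1) + (w 1)^2*(x 1)*(x 2)*(z 1)*(z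 2) + (w 1)^2*(x 1)^2 - 1*(w 1)^2*(x 1)^2*(z 2)^2 - 1*(w 1)^2*(x 0)*(z 0) - 1*(w 1)^2*(x 0)*(x 2)*(z 0)*(z 2) + (w 0)*(w 2)*(z 0)*(z 2) + (w 0)*(w 2)*(x 2)*(z 0) + (w 0)*(w 2)*(x 1)*(x 2)*(z 0)*(z 1) - 1*(w 0)*(w 2)*(x 1)^2*(z 0)*(z 2) + (w 0)*(w 2)*(x 0)*(z 2) + (w 0)*(w 2)*(x 0)*(x 2) - 1*(w 0)*(w 2)*(x 0)*(x 2)*(z 1)^2 + (w 0)*(w 2)*(x 0)*(x 1)*(z 1)*(z 2) + (w 0)*(w 1)*(z 0)*(z 1) - 1*(w 0)*(w 1)*(x 2)^2*(z 0)*(z 1) + (w 0)*(w 1)*(x 1)*(z 0) + (w 0)*(w 1)*(x 1)*(x 2)*(z 0)*(z 2) + (w 0)*(w 1)*(x 0)*(z 1) + (w 0)*(w 1)*(x 0)*(x 2)*(z 1)*(z 2) + (w 0)*(w 1)*(x 0)*(x 1) - 1*(w 0)*(w 1)*(x 0)*(x 1)*(z 2)^2) * hy' + ((x 2)^2 - 1*(x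 2)^2*(y 2)^2 - 1*(x 2)^2*(y 1)^2 + (x 1)^2 - 1*(x 1)^2*(y 2)^2 - 1*(x 1)^2*(y 1)^2 - 1*(x 0)*(x 2)*(y 0)*(y 2) - 1*(x 0)*(x 1)*(y 0)*(y 1) + (w 2)*(y 2) - 1*(w 2)*(x 2)^2*(y 2) - 1*(w 2)*(x 1)*(x 2)*(y 1) - 1*(w 2)*(x 0)*(x 2)*(y 0) + (w 2)^2*(y 2)^2 - 1*(w 2)^2*(x 2)^2 + (w 2)^2*(x 2)^2*(y 1)^2 - 1*(w 2)^2*(x 1)*(x 2)*(y 1)*(y 2) - 1*(w 2)^2*(x 1)^2 + (w 2)^2*(x 1)^2*(y 2)^2 + (w 2)^2*(x 1)^2*(y 1)^2 + (w 2)^2*(x 0)*(x 1)*(y 0)*(y 1) + (w 1)*(y 1) - 1*(w 1)*(x 1)*(x 2)*(y 2) - 1*(w 1)*(x 1)^2*(y 1) - 1*(w 1)*(x 0)*(x 1)*(y 0) + 2*(w 1)*(w 2)*(y 1)*(y 2) - 1*(w 1)*(w 2)*(x 2)^2*(y 1)*(y 2) - 1*(w 1)*(w 2)*(x 1)*(x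 2)*(y 2)^2 - 1*(w 1)*(w 2)*(x 1)*(x 2)*(y 1)^2 - 1*(w 1)*(w 2)*(x 1)^2*(y 1)*(y 2) - 1*(w 1)*(w 2)*(x 0)*(x 2)*(y 0)*(y 1) - 1*(w 1)*(w 2)*(x 0)*(x 1)*(y 0)*(y 2) + (w 1)^2*(y 1)^2 - 1*(w 1)^2*(x 2)^2 + (w 1)^2*(x 2)^2*(y 2)^2 + (w 1)^2*(x 2)^2*(y 1)^2 - 1*(w 1)^2*(x 1)*(x 2)*(y 1)*(y 2) - 1*(w 1)^2*(x 1)^2 + (w 1)^2*(x 1)^2*(y 2)^2 + (w 1)^2*(x 0)*(x 2)*(y 0)*(y 2) + (w 0)*(x 2)^2*(y 0) + (w 0)*(x 1)^2*(y 0) - 1*(w 0)*(x 0)*(x 2)*(y 2) - 1*(w 0)*(x 0)*(x 1)*(y 1) + (w 0)*(w 2)*(y 0)*(y 2) - 1*(w 0)*(w 2)*(x 1)*(x 2)*(y 0)*(y 1) + (w 0)*(w 2)*(x 1)^2*(y 0)*(y 2) - 1*(w 0)*(w 2)*(x 0)*(x 2) + (w 0)*(w 2)*(x 0)*(x 2)*(y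 1)^2 - 1*(w 0)*(w 2)*(x 0)*(x 1)*(y 1)*(y 2) + (w 0)*(w 1)*(y 0)*(y 1) + (w 0)*(w 1)*(x 2)^2*(y 0)*(y 1) - 1*(w 0)*(w 1)*(x 1)*(x 2)*(y 0)*(y 2) - 1*(w 0)*(w 1)*(x 0)*(x 2)*(y 1)*(y 2) - 1*(w 0)*(w 1)*(x 0)*(x 1) + (w 0)*(w 1)*(x 0)*(x 1)*(y 2)^2) * hz'
  · simp only [FF, Complex.mul_im, Complex.ofReal_re, Complex.ofReal_im, cmk_re, cmk_im,
      tripleProd, PiLp.inner_apply, RCLike.inner_apply, conj_trivial, Fin.sum_univ_three]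
    linear_combination ((y 0)*(y 2)*(z 1) - 1*(y 0)*(y 1)*(z 2) + (x 2)*(y 1)*(z 0) - 1*(x 2)*(y 0)*(z 1) + (x 2)*(y 0)*(y 1) - 1*(x 2)*(y 0)*(y 1)*(z 2)^2 - 1*(x 2)*(y 0)*(y 1)*(z 1)^2 - 1*(x 2)*(y 0)*(y 1)*(z 0)^2 + (x 2)^2*(y 1)*(z 0)*(z 2) - 1*(x 2)^2*(y 0)*(z 1)*(z 2) - 1*(x 2)^2*(y 0)*(y 2)*(z 1) + (x 2)^2*(y 0)*(y 1)*(z 2) - 1*(x 1)*(y 2)*(z 0) + (x 1)*(y 0)*(z 2) - 1*(x 1)*(y 0)*(y 2) + (x 1)*(y 0)*(y 2)*(z 2)^2 + (x 1)*(y 0)*(y 2)*(z 1)^2 + (x 1)*(y 0)*(y 2)*(z 0)^2 - 1*(x 1)*(x 2)*(y 2)*(z 0)*(z 2) + (x 1)*(x 2)*(y 1)*(z 0)*(z 1) + (x 1)*(x 2)*(y 0)*(z 2)^2 - 1*(x 1)*(x 2)*(y 0)*(z 1)^2 - 1*(x 1)^2*(y 2)*(z 0)*(z 1) + (x 1)^2*(y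 0)*(z 1)*(z 2) - 1*(x 1)^2*(y 0)*(y 2)*(z 1) + (x 1)^2*(y 0)*(y 1)*(z 2) + (x 0)*(y 2)*(z 1) - 1*(x 0)*(y 1)*(z 2) + (x 0)*(x 2)*(y 2)*(z 1)*(z 2) - 1*(x 0)*(x 2)*(y 1)*(z 2)^2 + (x 0)*(x 2)*(y 1)*(z 0)^2 - 1*(x 0)*(x 2)*(y 0)*(z 0)*(z 1) + (x 0)*(x 1)*(y 2)*(z 1)^2 - 1*(x 0)*(x 1)*(y 2)*(z 0)^2 - 1*(x 0)*(x 1)*(y 1)*(z 1)*(z 2) + (x 0)*(x 1)*(y 0)*(z 0)*(z 2) + (x 0)^2*(y 2)*(z 0)*(z 1) - 1*(x 0)^2*(y 1)*(z 0)*(z 2) - 1*(x 0)^2*(y 0)*(y 2)*(z 1) + (x 0)^2*(y 0)*(y 1)*(z 2)) * hw' + (-1*(y 0)*(y 2)*(z 1) + (y 0)*(y 1)*(z 2) + (w 2)*(z 0)*(z 1) - 1*(w 2)*(y 2)^2*(z 0)*(z 1) - 1*(w 2)*(y 1)*(z 0) - 1*(w 2)*(y 1)^2*(z 0)*(z 1)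 + (w 2)*(y 0)*(z 1) - 1*(w 2)*(y 0)^2*(z 0)*(z 1) - 1*(w 2)^2*(y 1)*(y 2)*(z 0) + 2*(w 2)^2*(y 0)*(y 2)*(z 1) - 1*(w 2)^2*(y 0)*(y 1)*(z 2) - 1*(w 1)*(z 0)*(z 2) + (w 1)*(y 2)*(z 0) + (w 1)*(y 2)^2*(z 0)*(z 2) + (w 1)*(y 1)^2*(z 0)*(z 2) - 1*(w 1)*(y 0)*(z 2) + (w 1)*(y 0)^2*(z 0)*(z 2) + (w 1)*(w 2)*(y 2)^2*(z 0) - 1*(w 1)*(w 2)*(y 1)^2*(z 0) - 1*(w 1)*(w 2)*(y 0)*(y 2)*(z 2) + (w 1)*(w 2)*(y 0)*(y 1)*(z 1) + (w 1)^2*(y 1)*(y 2)*(z 0) + (w 1)^2*(y 0)*(y 2)*(z 1) - 2*(w 1)^2*(y 0)*(y 1)*(z 2) - 1*(w 0)*(y 2)*(z 1) + (w 0)*(y 1)*(z 2) - 1*(w 0)*(w 2)*(y 2)^2*(z 1) + (w 0)*(w 2)*(y 1)*(y 2)*(z 2) - 1*(w 0)*(w 2)*(y 0)*(y 1)*(z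 0) + (w 0)*(w 2)*(y 0)^2*(z 1) - 1*(w 0)*(w 1)*(y 1)*(y 2)*(z 1) + (w 0)*(w 1)*(y 1)^2*(z 2) + (w 0)*(w 1)*(y 0)*(y 2)*(z 0) - 1*(w 0)*(w 1)*(y 0)^2*(z 2)) * hx' + (-1*(w 2)*(z 0)*(z 1) + (w 2)*(x 2)^2*(z 0)*(z 1) + (w 2)*(x 1)*(z 0) + (w 2)*(x 1)*(x 2)*(z 0)*(z 2) + 2*(w 2)*(x 1)^2*(z 0)*(z 1) - 1*(w 2)*(x 0)*(z 1) - 1*(w 2)*(x 0)*(x 2)*(z 1)*(z 2) - 1*(w 2)*(x 0)*(x 1)*(z 1)^2 + (w 2)*(x 0)*(x 1)*(z 0)^2 + (w 1)*(z 0)*(z 2) - 1*(w 1)*(x 2)*(z 0) - 2*(w 1)*(x 2)^2*(z 0)*(z 2) - 1*(w 1)*(x 1)*(x 2)*(z 0)*(z 1) - 1*(w 1)*(x 1)^2*(z 0)*(z 2) + (w 1)*(x 0)*(z 2) + (w 1)*(x 0)*(x 2)*(z 2)^2 - 1*(w 1)*(x 0)*(x 2)*(z 0)^2 + (w 1)*(x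 0)*(x 1)*(z 1)*(z 2) + (w 0)*(x 2)*(z 1) + (w 0)*(x 2)^2*(z 1)*(z 2) - 1*(w 0)*(x 1)*(z 2) - 1*(w 0)*(x 1)*(x 2)*(z 2)^2 + (w 0)*(x 1)*(x 2)*(z 1)^2 - 1*(w 0)*(x 1)^2*(z 1)*(z 2) + (w 0)*(x 0)*(x 2)*(z 0)*(z 1) - 1*(w 0)*(x 0)*(x 1)*(z 0)*(z 2) + (w 0)*(w 2)*(x 1) - 1*(w 0)*(w 2)*(x 1)*(z 2)^2 - 1*(w 0)*(w 2)*(x 1)*(z 1)^2 - 1*(w 0)*(w 2)*(x 1)*(z 0)^2 - 1*(w 0)*(w 1)*(x 2) + (w 0)*(w 1)*(x 2)*(z 2)^2 + (w 0)*(w 1)*(x 2)*(z 1)^2 + (w 0)*(w 1)*(x 2)*(z 0)^2) * hy' + (-1*(x 2)*(y 0)*(y 1) + (x 1)*(y 0)*(y 2) - 1*(w 2)*(x 1)*(y 0) + (w 2)*(x 0)*(y 1) + (w 2)^2*(x 2)*(y 0)*(y 1) - 2*(w 2)^2*(x 1)*(y 0)*(y 2) + (w 2)^2*(x 0)*(y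 1)*(y 2) + (w 1)*(x 2)*(y 0) - 1*(w 1)*(x 0)*(y 2) + (w 1)*(w 2)*(x 2)*(y 0)*(y 2) - 1*(w 1)*(w 2)*(x 1)*(y 0)*(y 1) - 1*(w 1)*(w 2)*(x 0)*(y 2)^2 + (w 1)*(w 2)*(x 0)*(y 1)^2 + 2*(w 1)^2*(x 2)*(y 0)*(y 1) - 1*(w 1)^2*(x 1)*(y 0)*(y 2) - 1*(w 1)^2*(x 0)*(y 1)*(y 2) - 1*(w 0)*(x 2)*(y 1) + (w 0)*(x 1)*(y 2) - 1*(w 0)*(w 2)*(x 2)*(y 1)*(y 2) - 1*(w 0)*(w 2)*(x 1) + 2*(w 0)*(w 2)*(x 1)*(y 2)^2 + (w 0)*(w 2)*(x 1)*(y 1)^2 + (w 0)*(w 2)*(x 0)*(y 0)*(y 1) + (w 0)*(w 1)*(x 2) - 1*(w 0)*(w 1)*(x 2)*(y 2)^2 - 2*(w 0)*(w 1)*(x 2)*(y 1)^2 + (w 0)*(w 1)*(x 1)*(y 1)*(y 2) - 1*(w 0)*(w 1)*(x 0)*(y 0)*(y 2)) * hz'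

private lemma area_cocycle (w x y z : EuclideanSpace ℝ (Fin 3))
    (hw : ‖w‖ = 1) (hx : ‖x‖ = 1) (hy : ‖y‖ = 1) (hz : ‖z‖ = 1)
    (hxy : x + y ≠ 0) (hyz : y + z ≠ 0) (hzx : z + x ≠ 0)
    (hwx : w + x ≠ 0) (hwy : w + y ≠ 0) (hwz : w + z ≠ 0)
    (h1 : sphArea x y z ∈ Set.Ioo (-Real.pi) Real.pi)
    (h2 : sphArea w x z ∈ Set.Ioo (-Real.pi) Real.pi)
    (h3 : sphArea w x y ∈ Set.Ioo (-Real.pi) Real.pi)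
    (h4 : sphArea w y z ∈ Set.Ioo (-Real.pi) Real.pi) :
    sphArea x y z + sphArea w x z = sphArea w x y + sphArea w y z := by
  have hzw : z + w ≠ 0 := fun h => hwz (by rw [← h]; abel)
  have hxw : x + w ≠ 0 := fun h => hwx (by rw [← h]; abel)
  have hyw : y + w ≠ 0 := fun h => hwy (by rw [← h]; abel)
  have hzx' : x + z ≠ 0 := fun h => hzx (by rw [← h]; abel)
  have na : FF x y z ≠ 0 := FF_ne_zero x y z hx hy hz hxy hyz hzx
  have nb : FF w x z ≠ 0 := FF_ne_zero w x z hw hx hz hwx hzx' hzw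
  have nc : FF w x y ≠ 0 := FF_ne_zero w x y hw hx hy hwx hxy hyw
  have nd : FF w y z ≠ 0 := FF_ne_zero w y z hw hy hz hwy hyz hzw
  rw [sphArea_eq_arg] at h1 h2 h3 h4 ⊢
  rw [sphArea_eq_arg, sphArea_eq_arg, sphArea_eq_arg]
  obtain ⟨h1l, h1r⟩ := h1
  obtain ⟨h2l, h2r⟩ := h2
  obtain ⟨h3l, h3r⟩ := h3
  obtain ⟨h4l, h4r⟩ := h4
  have hab : (FF x y z * FF w x z).arg = (FF x y z).arg + (FF w x z).arg :=
    (Complex.arg_mul_eq_add_arg_iff na nb).mpr ⟨by linarith, by linarith⟩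
  have hcd : (FF w x y * FF w y z).arg = (FF w x y).arg + (FF w y z).arg :=
    (Complex.arg_mul_eq_add_arg_iff nc nd).mpr ⟨by linarith, by linarith⟩
  have pwy : (0:ℝ) < 1 + ⟪w, y⟫ := pos_inner w y hw hy hwy
  have pxz : (0:ℝ) < 1 + ⟪x, z⟫ := pos_inner x z hx hz hzx'
  have harg : (FF x y z * FF w x z).arg = (FF w x y * FF w y z).arg := by
    rw [← Complex.arg_real_mul (FF x y z * FF w x z) pwy,
      ← Complex.arg_real_mul (FF w x y * FF w y z) pxz, key_mul w x y z hw hx hy hz]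
  rw [hab, hcd] at harg
  linarith

private lemma sph_norm (v : Sph) : ‖(v : EuclideanSpace ℝ (Fin 3))‖ = 1 :=
  mem_sphere_zero_iff_norm.mp v.2

theorem sphere_groupoid_three_associative (p q r : Arr)
    (hp : ArrValid p) (hq : ArrValid q) (hr : ArrValid r)
    (h1 : gDef p q) (h2 : gDef (gMul p q) r)
    (h3 : gDef q r) (h4 : gDef p (gMul q r)) :
    gMul (gMul p q) r = gMul p (gMul q r) := by
  obtain ⟨e1, n1, m1⟩ := h1
  obtain ⟨e2, n2, m2⟩ := h2
  obtain ⟨e3, n3, m3⟩ := h3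
  obtain ⟨e4, n4, m4⟩ := h4
  simp only [gMul] at n2 m2 n4 m4 ⊢
  -- vectors
  have hW := sph_norm r.2.1
  have hX := sph_norm q.2.1
  have hY := sph_norm p.2.1
  have hZ := sph_norm p.1
  rw [← e1] at n3 m3 ⊢
  have hp' : (↑p.2.1 + ↑p.1 : EuclideanSpace ℝ (Fin 3)) ≠ 0 := hp
  have hq' : (↑q.2.1 + ↑p.2.1 : EuclideanSpace ℝ (Fin 3)) ≠ 0 := by
    have h : (↑q.2.1 + ↑q.1 : EuclideanSpace ℝ (Fin 3)) ≠ 0 := hq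
    rwa [← e1] at h
  have hr' : (↑r.2.1 + ↑q.2.1 : EuclideanSpace ℝ (Fin 3)) ≠ 0 := by
    have h : (↑r.2.1 + ↑r.1 : EuclideanSpace ℝ (Fin 3)) ≠ 0 := hr
    rwa [← e3] at h
  have n1' : (↑p.1 + ↑q.2.1 : EuclideanSpace ℝ (Fin 3)) ≠ 0 := by
    rwa [add_comm] at n1
  have key := area_cocycle (r.2.1 : EuclideanSpace ℝ (Fin 3)) (q.2.1 : EuclideanSpace ℝ (Fin 3))
    (p.2.1 : EuclideanSpace ℝ (Fin 3)) (p.1 : EuclideanSpace ℝ (Fin 3))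
    hW hX hY hZ hq' hp' n1' hr' n3 n2 m1 m2 m3 m4
  refine Prod.ext rfl (Prod.ext rfl ?_)
  show _ + _ + _ = _ + _ + _
  linarith [key]
end

section
/- For the local groupoid G'' over S² defined by areas of spherical triangles (multiplication (z,y,a)·(y,x,a') = (z,x,a+a'+A(Δxyz)) defined when x+z ≠ 0 and A(Δxyz) ∈ (-π,π)), there exist arrows g_1,...,g_6 forming a composable 6-tuple and two full bracketings of the 6-fold product that are both defined but yield different results; concretely, using the seven points obtained from a regular tetrahedron inscribed in S² together with the radial projections of three edge midpoints, one evaluation gives third coordinate 2π and another gives -2π. Hence G'' is not globally associative and not globalizable. -/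
open scoped RealInnerProductSpace

/-! The points `x₀, …, x₆ = e₁, e₂, -e₃, -e₁, e₃, -e₂, e₁` are vertices of the octahedron
formed by the normalised edge midpoints of the tetrahedron `(±1, ±1, ±1)/√3`, and they trace a
closed hexagon that cuts the sphere into two halves of four octants each. All labels being `0`,
a bracketing evaluates to the sum of the signed areas of the triangles it forms, and each of
these is an octant (area `±π/2`, since `A = 2 arctan (x ⋅ (y × z))` for an orthogonal triple) or
degenerate of the form `(x, y, x)` (area `0`). The bracketing `F(E((D(CB))A))` tiles one half by
positively oriented octants and `((F((ED)C))B)A` the other half by negatively oriented ones, so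
they give `2π` and `-2π`; the discrepancy `4π` is the area of the sphere. -/

open Real

noncomputable section

lemma inv_norm_smul_eq_of_eq_smul {E : Type*} [NormedAddCommGroup E] [NormedSpace ℝ E]
    {v u : E} {c : ℝ} (hc : 0 < c) (hu : ‖u‖ = 1) (h : v = c • u) : ‖v‖⁻¹ • v = u := by
  rw [h, norm_smul, hu, mul_one, Real.norm_of_nonneg hc.le, smul_smul, inv_mul_cancel₀ hc.ne',
    one_smul]

lemma arg_one_add_mul_I_eq_arctan (t : ℝ) : Complex.arg ⟨1, t⟩ = arctan t := by
  have hr : 0 < √(1 + t ^ 2) := by positivity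
  have h : (⟨1, t⟩ : ℂ) =
      √(1 + t ^ 2) * (Complex.cos (arctan t) + Complex.sin (arctan t) * Complex.I) := by
    rw [← Complex.ofReal_cos, ← Complex.ofReal_sin, cos_arctan, sin_arctan]
    apply Complex.ext <;> simp <;> field_simp
  rw [h, Complex.arg_mul_cos_add_sin_mul_I hr]
  exact ⟨by linarith [neg_pi_div_two_lt_arctan t, pi_pos],
    by linarith [arctan_lt_pi_div_two t, pi_pos]⟩

section Coordinates

variable (a b c a' b' c' : ℝ)

lemma inner_toLp_three : ⟪!₂[a, b, c], !₂[a', b', c']⟫ = a * a' + b * b' + c * c' := by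
  simp [PiLp.inner_apply, Fin.sum_univ_three]
  ring

lemma norm_toLp_three : ‖!₂[a, b, c]‖ = √(a ^ 2 + b ^ 2 + c ^ 2) := by
  simp [EuclideanSpace.norm_eq, Fin.sum_univ_three]

end Coordinates

lemma tripleProd_self_left (x y : EuclideanSpace ℝ (Fin 3)) : tripleProd x y x = 0 := by
  unfold tripleProd
  ring

section SphArea

variable {x y z : EuclideanSpace ℝ (Fin 3)}

lemma sphArea_of_inner_eq_zero (hxy : ⟪x, y⟫ = 0) (hyz : ⟪y, z⟫ = 0) (hzx : ⟪z, x⟫ = 0) :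
    sphArea x y z = 2 * arctan (tripleProd x y z) := by
  rw [sphArea, hxy, hyz, hzx, add_zero, add_zero, add_zero, arg_one_add_mul_I_eq_arctan]

lemma sphArea_self_left (hy : ‖y‖ ≤ 1) : sphArea x y x = 0 := by
  have hcs : -(‖x‖ * ‖y‖) ≤ ⟪x, y⟫ := neg_le_of_abs_le (abs_real_inner_le_norm x y)
  have hxy : ‖x‖ * ‖y‖ ≤ ‖x‖ := mul_le_of_le_one_right (norm_nonneg x) hy
  have hre : 0 ≤ 1 + ⟪x, y⟫ + ⟪y, x⟫ + ⟪x, x⟫ := by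
    rw [real_inner_comm x y, real_inner_self_eq_norm_sq]
    nlinarith [sq_nonneg (1 - ‖x‖)]
  rw [sphArea, tripleProd_self_left, ← Complex.ofReal_def, Complex.arg_ofReal_of_nonneg hre,
    mul_zero]

end SphArea

def Sph.ofCoords (a b c : ℝ) (h : a ^ 2 + b ^ 2 + c ^ 2 = 1) : Sph :=
  ⟨!₂[a, b, c], by rw [mem_sphere_zero_iff_norm, norm_toLp_three, h, sqrt_one]⟩

@[simp] lemma Sph.coe_ofCoords (a b c : ℝ) (h : a ^ 2 + b ^ 2 + c ^ 2 = 1) :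
    ((Sph.ofCoords a b c h : Sph) : EuclideanSpace ℝ (Fin 3)) = !₂[a, b, c] := rfl

def tetra (i : Fin 4) : EuclideanSpace ℝ (Fin 3) :=
  (√3)⁻¹ • ![!₂[1, 1, 1], !₂[1, -1, -1], !₂[-1, 1, -1], !₂[-1, -1, 1]] i

lemma norm_tetra (i : Fin 4) : ‖tetra i‖ = 1 := by
  fin_cases i <;> norm_num [tetra, norm_smul, norm_toLp_three, abs_of_nonneg]

lemma inner_tetra_of_ne {i j : Fin 4} (h : i ≠ j) : ⟪tetra i, tetra j⟫ = -(1 / 3) := by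
  revert h
  fin_cases i <;> fin_cases j <;>
    norm_num [tetra, inner_smul_left, inner_smul_right, inner_toLp_three, ← mul_inv]

def octaPath : Fin 7 → Sph :=
  ![.ofCoords 1 0 0 (by norm_num), .ofCoords 0 1 0 (by norm_num), .ofCoords 0 0 (-1) (by norm_num),
    .ofCoords (-1) 0 0 (by norm_num), .ofCoords 0 0 1 (by norm_num),
    .ofCoords 0 (-1) 0 (by norm_num), .ofCoords 1 0 0 (by norm_num)]

lemma octaPath_eq_normalized_tetra_add (k : Fin 7) : ∃ i j, i ≠ j ∧
    (octaPath k : EuclideanSpace ℝ (Fin 3)) = ‖tetra i + tetra j‖⁻¹ • (tetra i + tetra j) := by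
  have edge (i j : Fin 4) (hij : i ≠ j)
      (h : tetra i + tetra j = (2 / √3) • (octaPath k : EuclideanSpace ℝ (Fin 3))) :
      ∃ i j, i ≠ j ∧
        (octaPath k : EuclideanSpace ℝ (Fin 3)) = ‖tetra i + tetra j‖⁻¹ • (tetra i + tetra j) :=
    ⟨i, j, hij, (inv_norm_smul_eq_of_eq_smul (by positivity) (by simpa using (octaPath k).2) h).symm⟩
  fin_cases k <;> [apply edge 0 1; apply edge 0 2; apply edge 1 2; apply edge 2 3; apply edge 0 3;
    apply edge 1 3; apply edge 0 1]
  all_goals first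
    | decide
    | ext m; fin_cases m <;> simp [tetra, octaPath]; ring

end

open scoped RealInnerProductSpace in
/-- Failure of 6-associativity in the spherical-area local groupoid
`G''`: there are seven points `x 0, …, x 6` on the sphere, obtained from a regular
inscribed tetrahedron together with radial projections of edge midpoints, such that
the six arrows `gᵢ = (x (i+1), x i, 0)` form a composable 6-tuple for which the two
bracketings `F(E((D(CB))A))` and `((F((ED)C))B)A` are both defined, one evaluating
to third coordinate `2π` and the other to `-2π`; in particular, the two evaluations
differ, so `G''` is not globally associative (hence not globalizable). -/
theorem sphere_groupoid_not_six_associative :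
    ∃ (x : Fin 7 → Sph) (v : Fin 4 → EuclideanSpace ℝ (Fin 3)),
      -- v is a regular tetrahedron inscribed in the unit sphere
      (∀ i, ‖v i‖ = 1) ∧
      (∀ i j, i ≠ j → ⟪v i, v j⟫ = -(1/3 : ℝ)) ∧
      -- each point x k is a vertex or the radial projection of an edge midpoint
      (∀ k : Fin 7, (∃ i, (x k : EuclideanSpace ℝ (Fin 3)) = v i) ∨
        ∃ i j, i ≠ j ∧ (x k : EuclideanSpace ℝ (Fin 3)) =
          ‖v i + v j‖⁻¹ • (v i + v j)) ∧
      -- the six arrows and the two bracketings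
      (let g : Fin 6 → Arr := fun i => (x i.succ, x i.castSucc, 0)
       let P1 := gMul (g 5) (gMul (g 4) (gMul (gMul (g 3) (gMul (g 2) (g 1))) (g 0)))
       let P2 := gMul (gMul (gMul (g 5) (gMul (gMul (g 4) (g 3)) (g 2))) (g 1)) (g 0)
       (∀ i, ArrValid (g i)) ∧
       -- all products in F(E((D(CB))A)) are defined
       gDef (g 2) (g 1) ∧
       gDef (g 3) (gMul (g 2) (g 1)) ∧
       gDef (gMul (g 3) (gMul (g 2) (g 1))) (g 0) ∧
       gDef (g 4) (gMul (gMul (g 3) (gMul (g 2) (g 1))) (g 0)) ∧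
       gDef (g 5) (gMul (g 4) (gMul (gMul (g 3) (gMul (g 2) (g 1))) (g 0))) ∧
       -- all products in ((F((ED)C))B)A are defined
       gDef (g 4) (g 3) ∧
       gDef (gMul (g 4) (g 3)) (g 2) ∧
       gDef (g 5) (gMul (gMul (g 4) (g 3)) (g 2)) ∧
       gDef (gMul (g 5) (gMul (gMul (g 4) (g 3)) (g 2))) (g 1) ∧
       gDef (gMul (gMul (g 5) (gMul (gMul (g 4) (g 3)) (g 2))) (g 1)) (g 0) ∧
       -- the two evaluations disagree: 2π versus -2π
       P1.2.2 = 2 * Real.pi ∧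
       P2.2.2 = -(2 * Real.pi) ∧
       P1 ≠ P2) := by
  refine ⟨octaPath, tetra, norm_tetra, fun _ _ => inner_tetra_of_ne,
    fun k => Or.inr (octaPath_eq_normalized_tetra_add k), ?_⟩
  intro g P1 P2
  refine ⟨?_, ?_, ?_, ?_, ?_, ?_, ?_, ?_, ?_, ?_, ?_, ?_, ?_,
    ne_of_apply_ne (fun p : Arr => p.2.2) (ne_of_gt ?_)⟩ <;>
  simp [g, P1, P2, gMul, gDef, ArrValid, octaPath, Fin.forall_fin_succ, ← WithLp.toLp_add,
    sphArea_of_inner_eq_zero, inner_toLp_three, tripleProd, arctan_one, sphArea_self_left,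
    norm_toLp_three] <;>
  and_intros <;> linarith [pi_pos]
end
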